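/- For the word β = a_{124}a_{123}a_{124}a_{123} in the generators of G_4^3, the MN-index invariant w_{(1,2,3)}(β) ∈ ℤ/2 * ℤ/2 * ℤ/2 * ℤ/2 (free product of ℤ/2's indexed by ℤ/2 × ℤ/2) equals the product of the generators indexed by (1,1) and (0,0), which is a nontrivial element of the free product; the indices are computed as: first occurrence of a_{123} has (N_{234}+N_{124}, N_{134}+N_{124}) = (0+1, 0+1) = (1,1), second occurrence has (0+2, 0+2) = (0,0) mod 2. -/

import Mathlib

/-- Index set: 3-element subsets of `{1,...,n}` (modeled as `Fin n`). -/
abbrev Gn3Idx (n : ℕ) := {m : Finset (Fin n) // m.card = 3}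

/-- Defining relations of the group `Gₙ³`: squares of generators, far-commutativity
for triples sharing at most one index, and the tetrahedron (octagon) relation. -/
def Gn3Rels (n : ℕ) : Set (FreeGroup (Gn3Idx n)) :=
  {r | (∃ m : Gn3Idx n, r = (FreeGroup.of m) ^ 2) ∨
    (∃ m m' : Gn3Idx n, (m.1 ∩ m'.1).card ≤ 1 ∧
      r = FreeGroup.of m * FreeGroup.of m' * (FreeGroup.of m)⁻¹ * (FreeGroup.of m')⁻¹) ∨
    (∃ (i j k l : Fin n) (h1 : ({i, j, k} : Finset (Fin n)).card = 3)
        (h2 : ({i, j, l} : Finset (Fin n)).card = 3)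
        (h3 : ({i, k, l} : Finset (Fin n)).card = 3)
        (h4 : ({j, k, l} : Finset (Fin n)).card = 3),
      List.Pairwise (· ≠ ·) [i, j, k, l] ∧
      r = FreeGroup.of ⟨{i, j, k}, h1⟩ * FreeGroup.of ⟨{i, j, l}, h2⟩ *
          FreeGroup.of ⟨{i, k, l}, h3⟩ * FreeGroup.of ⟨{j, k, l}, h4⟩ *
          (FreeGroup.of ⟨{j, k, l}, h4⟩ * FreeGroup.of ⟨{i, k, l}, h3⟩ *
           FreeGroup.of ⟨{i, j, l}, h2⟩ * FreeGroup.of ⟨{i, j, k}, h1⟩)⁻¹)}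

/-- The group `Gₙ³`. -/
abbrev Gn3 (n : ℕ) := PresentedGroup (Gn3Rels n)

/-- The generator `a_m` of `Gₙ³`. -/
def Gn3.gen {n : ℕ} (m : Gn3Idx n) : Gn3 n := PresentedGroup.of m

/-- The generators of `G₄³` (indices `1,2,3,4` modeled as `0,1,2,3 : Fin 4`). -/
def m123 : Gn3Idx 4 := ⟨{0, 1, 2}, by decide⟩
def m124 : Gn3Idx 4 := ⟨{0, 1, 3}, by decide⟩
def m134 : Gn3Idx 4 := ⟨{0, 2, 3}, by decide⟩
def m234 : Gn3Idx 4 := ⟨{1, 2, 3}, by decide⟩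

/-- The MN-index `i_c(4) = (N₂₃₄ + N₁₂₄, N₁₃₄ + N₁₂₄) ∈ ℤ/2 × ℤ/2` of an occurrence of
`a_{123}`, computed from the prefix `pre` of the word strictly before that occurrence. -/
def mnIndex (pre : List (Gn3Idx 4)) : ZMod 2 × ZMod 2 :=
  (((pre.count m234 + pre.count m124 : ℕ) : ZMod 2),
   ((pre.count m134 + pre.count m124 : ℕ) : ZMod 2))

/-- The list of MN-indices of the successive occurrences of `a_{123}` in a word `w`. -/
def mnList (w : List (Gn3Idx 4)) : List (ZMod 2 × ZMod 2) :=
  (List.range w.length).filterMap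
    (fun p => if w[p]? = some m123 then some (mnIndex (w.take p)) else none)

/-- The free product of copies of `ℤ/2` indexed by `ℤ/2 × ℤ/2` (the possible values of the
MN-index function on the single index `l = 4`). -/
abbrev MNTarget : Type :=
  PresentedGroup {r : FreeGroup (ZMod 2 × ZMod 2) | ∃ g, r = (FreeGroup.of g) ^ 2}

/-- The MN-index value `w_{(1,2,3)}(w)` of a word `w` in the generators of `G₄³`. -/
def mnValue (w : List (Gn3Idx 4)) : MNTarget :=
  ((mnList w).map PresentedGroup.of).prod

/-- The relations `g² = 1` presenting the free product of copies of `ℤ/2` indexed by `α`. -/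
abbrev squareRels (α : Type*) : Set (FreeGroup α) := {r | ∃ g, r = FreeGroup.of g ^ 2}

/-- The number of occurrences of `a` mod 2: well defined since every relator `g²` has an
even number of them. -/
def parityOf {α : Type*} [DecidableEq α] (a : α) :
    PresentedGroup (squareRels α) →* Multiplicative (ZMod 2) :=
  PresentedGroup.toGroup (f := fun x => if x = a then Multiplicative.ofAdd 1 else 1) <| by
    rintro r ⟨g, rfl⟩
    have hsq : ∀ y : Multiplicative (ZMod 2), y ^ 2 = 1 := by decide
    simp only [map_pow, FreeGroup.lift_apply_of, hsq]

theorem parityOf_of {α : Type*} [DecidableEq α] (a x : α) :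
    parityOf a (PresentedGroup.of x) = if x = a then Multiplicative.ofAdd 1 else 1 :=
  PresentedGroup.toGroup.of _

theorem of_mul_of_ne_one {α : Type*} {a b : α} (hab : a ≠ b) :
    (PresentedGroup.of a * PresentedGroup.of b : PresentedGroup (squareRels α)) ≠ 1 := by
  classical
  intro h
  have hparity := congrArg (parityOf a) h
  simp only [map_mul, map_one, parityOf_of, if_neg hab.symm, mul_one] at hparity
  exact absurd hparity (by decide)

/-- For `β = a_{124}a_{123}a_{124}a_{123}`, the MN-indices of the two occurrences of
`a_{123}` are `(1,1)` and `(0,0)`, so `w_{(1,2,3)}(β)` is the product of the generators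
indexed by `(1,1)` and `(0,0)`, a nontrivial element of the free product of `ℤ/2`'s. -/
theorem mn_value_nontrivial :
    mnList [m124, m123, m124, m123] = [((1, 1) : ZMod 2 × ZMod 2), (0, 0)] ∧
    mnValue [m124, m123, m124, m123] =
      PresentedGroup.of ((1, 1) : ZMod 2 × ZMod 2) *
        PresentedGroup.of ((0, 0) : ZMod 2 × ZMod 2) ∧
    mnValue [m124, m123, m124, m123] ≠ 1 := by
  have hlist : mnList [m124, m123, m124, m123] = [((1, 1) : ZMod 2 × ZMod 2), (0, 0)] := by
    decide
  have hvalue : mnValue [m124, m123, m124, m123] =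
      PresentedGroup.of ((1, 1) : ZMod 2 × ZMod 2) *
        PresentedGroup.of ((0, 0) : ZMod 2 × ZMod 2) := by
    simp only [mnValue, hlist, List.map_cons, List.map_nil, List.prod_cons, List.prod_nil, mul_one]
  exact ⟨hlist, hvalue, hvalue ▸ of_mul_of_ne_one (by decide)⟩
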